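/- arXiv:2307.12851 — 6 statements merged into one kernel-verified Lean document; each statement's English description precedes it below -/
import Mathlib

section
/- For the logistic loss ℓ(y, ŷ) = 2·log(1 + exp(−y·ŷ)), for any y ∈ {−1, +1} and any ŷ with |ŷ| ≤ 1, the derivative satisfies |−∂ℓ/∂ŷ(y, ŷ) − y| ≤ 2|ŷ|. -/
lemma abs_two_mul_div_one_add_sub_one_le {u : ℝ} (hu : 0 ≤ u) :
    |2 * u / (1 + u) - 1| ≤ |u - 1| := by
  have hpos : 0 < 1 + u := by linarith
  rw [show 2 * u / (1 + u) - 1 = (u - 1) / (1 + u) by field_simp; ring, abs_div,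
    abs_of_pos hpos]
  exact div_le_self (abs_nonneg _) (by linarith)

/-- Logistic loss ℓ(y, yh) = 2·log(1 + exp(−y·yh)): for y ∈ {−1, +1} and |yh| ≤ 1,
    |−∂ℓ/∂yh(y, yh) − y| = |2y·exp(−y·yh)/(1 + exp(−y·yh)) − y| ≤ 2|yh|. -/
theorem logistic_loss_deriv_bound (y yh : ℝ) (hy : y = 1 ∨ y = -1) (hyh : |yh| ≤ 1) :
    |2 * y * Real.exp (-(y * yh)) / (1 + Real.exp (-(y * yh))) - y| ≤ 2 * |yh| := by
  have hy_abs : |y| = 1 := by rcases hy with rfl | rfl <;> norm_num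
  have hmargin : |-(y * yh)| = |yh| := by rw [abs_neg, abs_mul, hy_abs, one_mul]
  set u := Real.exp (-(y * yh))
  calc |2 * y * u / (1 + u) - y|
      = |y| * |2 * u / (1 + u) - 1| := by rw [← abs_mul]; congr 1; field_simp
    _ = |2 * u / (1 + u) - 1| := by rw [hy_abs, one_mul]
    _ ≤ |u - 1| := abs_two_mul_div_one_add_sub_one_le (Real.exp_pos _).le
    _ ≤ 2 * |-(y * yh)| := Real.abs_exp_sub_one_le (hmargin ▸ hyh)
    _ = 2 * |yh| := by rw [hmargin]
end

section
/- Under the μ-separation assumption with μ > 0 and X_min = min_i ‖x_i‖ > 0, every unit vector x_c in the conic hull K = {Σ_i a_i x_i y_i : a_i ≥ 0} \ {0} satisfies: for every i with y_i = +1, ⟨x_c, x_i⟩ ≥ μ X_min > 0, and for every i with y_i = −1, ⟨x_c, x_i⟩ ≤ −μ X_min < 0. In particular, x_c ∈ S_+ = {z : ⟨x_i, z⟩ > 0 ⟺ y_i > 0 for all i}. -/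
open Finset RealInnerProductSpace

/-- The triangle inequality `‖∑ a j • v j‖ ≤ ∑ a j ‖v j‖` lets the separation bound pass from the
generators to their nonnegative combinations. -/
theorem mul_norm_mul_norm_le_inner_sum_smul {ι E : Type*} [NormedAddCommGroup E]
    [InnerProductSpace ℝ E] (s : Finset ι) (v : ι → E) (w : E) {μ : ℝ} (hμ : 0 ≤ μ)
    (a : ι → ℝ) (ha : ∀ j ∈ s, 0 ≤ a j) (hsep : ∀ j ∈ s, μ * (‖v j‖ * ‖w‖) ≤ ⟪v j, w⟫) :
    μ * (‖∑ j ∈ s, a j • v j‖ * ‖w‖) ≤ ⟪∑ j ∈ s, a j • v j, w⟫ := by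
  have hnorm : ‖∑ j ∈ s, a j • v j‖ ≤ ∑ j ∈ s, a j * ‖v j‖ :=
    (norm_sum_le _ _).trans_eq <| sum_congr rfl fun j hj => by
      rw [norm_smul, Real.norm_of_nonneg (ha j hj)]
  calc μ * (‖∑ j ∈ s, a j • v j‖ * ‖w‖)
      ≤ μ * ((∑ j ∈ s, a j * ‖v j‖) * ‖w‖) := by gcongr
    _ = ∑ j ∈ s, a j * (μ * (‖v j‖ * ‖w‖)) := by
      rw [sum_mul, mul_sum]
      exact sum_congr rfl fun j _ => by ring
    _ ≤ ∑ j ∈ s, a j * ⟪v j, w⟫ :=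
      sum_le_sum fun j hj => mul_le_mul_of_nonneg_left (hsep j hj) (ha j hj)
    _ = ⟪∑ j ∈ s, a j • v j, w⟫ := by simp only [sum_inner, real_inner_smul_left]

/-- Every unit vector in the conic hull K of the signed data is uniformly activated by the
    positive data and deactivated by the negative data; in particular it lies in S_+. -/
theorem conic_hull_unit_in_Splus {D n : ℕ}
    (x : Fin n → EuclideanSpace ℝ (Fin D)) (y : Fin n → ℝ)
    (μ Xmin : ℝ) (hμ : 0 < μ) (hXmin : 0 < Xmin)
    (hy : ∀ i, y i = 1 ∨ y i = -1)
    (hmin : ∀ i, Xmin ≤ ‖x i‖)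
    (hsep : ∀ i j, μ * (‖x i‖ * ‖x j‖) ≤ (inner ℝ (y i • x i) (y j • x j) : ℝ))
    (a : Fin n → ℝ) (ha : ∀ j, 0 ≤ a j)
    (xc : EuclideanSpace ℝ (Fin D))
    (hxc : xc = ∑ j, a j • (y j • x j)) (hunit : ‖xc‖ = 1) :
    0 < μ * Xmin ∧
    (∀ i, y i = 1 → μ * Xmin ≤ (inner ℝ xc (x i) : ℝ)) ∧
    (∀ i, y i = -1 → (inner ℝ xc (x i) : ℝ) ≤ -(μ * Xmin)) ∧
    (∀ i, 0 < (inner ℝ (x i) xc : ℝ) ↔ 0 < y i) := by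
  have hnorm_signed : ∀ i, ‖y i • x i‖ = ‖x i‖ := fun i => by
    rcases hy i with h | h <;> simp [h]
  have hsigned : ∀ i, μ * Xmin ≤ ⟪xc, y i • x i⟫ := fun i => by
    have h := mul_norm_mul_norm_le_inner_sum_smul univ (fun j => y j • x j) (y i • x i) hμ.le a
      (fun j _ => ha j) fun j _ => by simpa only [hnorm_signed] using hsep j i
    rw [← hxc, hunit, one_mul, hnorm_signed] at h
    exact (mul_le_mul_of_nonneg_left (hmin i) hμ.le).trans h
  have hplus : ∀ i, y i = 1 → μ * Xmin ≤ ⟪xc, x i⟫ := fun i h => by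
    simpa [h] using hsigned i
  have hminus : ∀ i, y i = -1 → ⟪xc, x i⟫ ≤ -(μ * Xmin) := fun i h => by
    have := hsigned i
    rw [h, neg_one_smul, inner_neg_right] at this
    linarith
  have hpos : 0 < μ * Xmin := mul_pos hμ hXmin
  refine ⟨hpos, hplus, hminus, fun i => ?_⟩
  rw [real_inner_comm]
  rcases hy i with h | h
  · simp only [h, zero_lt_one, iff_true]
    linarith [hplus i h]
  · simp only [h, Left.neg_pos_iff, (zero_lt_one' ℝ).not_gt, iff_false, not_lt]
    linarith [hminus i h]
end

section
/- Consider gradient flow on L_lin(W, v) = Σ_{i=1}^n ℓ(y_i, v^T W^T x_i) with exponential loss ℓ(y, ŷ) = exp(−y ŷ), where W ∈ ℝ^{D×h}, v ∈ ℝ^h. Suppose the data is linearly separable with margin γ > 0: there exists a unit vector z with y_i⟨z, x_i⟩ ≥ γ for all i. Then along the gradient flow, dL_lin/dt ≤ −‖v‖² γ² L_lin². -/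
/-!
Write `u = ∑ᵢ yᵢ ℓᵢ xᵢ` with `ℓᵢ = exp (-yᵢ vᵀWᵀxᵢ)`. The flow is `Ẇ = u vᵀ`, `v̇ = Wᵀu`, so
`dL/dt = -uᵀ(Ẇ v + W v̇) = -(‖v‖² ‖u‖² + ‖Wᵀu‖²) ≤ -‖v‖² ‖u‖²`. Pairing `u` with the unit
vector `z` and using the margin gives `⟪u, z⟫ ≥ γ L`, hence `‖u‖² ≥ γ² L²` by Cauchy–Schwarz.
-/

open Matrix Finset

section

variable {ι m n : Type*} [Fintype ι]

lemma hasDerivAt_dotProduct_mulVec [Fintype m] [Fintype n] (a : m → ℝ)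
    {W : ℝ → Matrix m n ℝ} {v : ℝ → n → ℝ} {W' : Matrix m n ℝ} {v' : n → ℝ} {t : ℝ}
    (hW : ∀ i j, HasDerivAt (fun s => W s i j) (W' i j) t)
    (hv : ∀ j, HasDerivAt (fun s => v s j) (v' j) t) :
    HasDerivAt (fun s => a ⬝ᵥ (W s *ᵥ v s)) (a ⬝ᵥ (W' *ᵥ v t + W t *ᵥ v')) t := by
  refine (HasDerivAt.fun_sum fun i _ =>
    (HasDerivAt.fun_sum fun j _ => (hW i j).mul (hv j)).const_mul (a i)).congr_deriv ?_
  simp only [dotProduct, mulVec, Pi.add_apply, mul_add, sum_add_distrib]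

lemma dotProduct_vecMulVec_mulVec_add_mulVec_vecMul [Fintype m] [Fintype n] (u : m → ℝ)
    (v : n → ℝ) (W : Matrix m n ℝ) :
    u ⬝ᵥ (vecMulVec u v *ᵥ v + W *ᵥ (u ᵥ* W)) =
      (∑ k, v k ^ 2) * ∑ j, u j ^ 2 + ∑ k, (u ᵥ* W) k ^ 2 := by
  rw [dotProduct_add, vecMulVec_mulVec, op_smul_eq_smul, dotProduct_smul, dotProduct_mulVec]
  simp only [dotProduct, smul_eq_mul, sq]

/-- Minus the gradient in `w` of `∑ᵢ exp (-yᵢ ⟪w, xᵢ⟫)`, evaluated where the predictions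
`⟪w, xᵢ⟫` equal `pᵢ`. -/
noncomputable def expLossNegGrad (x : ι → m → ℝ) (y p : ι → ℝ) : m → ℝ :=
  ∑ i, (y i * Real.exp (-(y i * p i))) • x i

variable (x : ι → m → ℝ) (y p : ι → ℝ)

lemma expLossNegGrad_apply (j : m) :
    expLossNegGrad x y p j = ∑ i, y i * Real.exp (-(y i * p i)) * x i j := by
  simp [expLossNegGrad]

lemma expLossNegGrad_vecMul_apply [Fintype m] (M : Matrix m n ℝ) (k : n) :
    (expLossNegGrad x y p ᵥ* M) k = ∑ i, y i * Real.exp (-(y i * p i)) * (x i ᵥ* M) k := by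
  simp [expLossNegGrad, sum_vecMul, smul_vecMul]

lemma hasDerivAt_sum_exp_neg_mul [Fintype m] {f : ℝ → ι → ℝ} {w : m → ℝ} {t : ℝ}
    (hf : ∀ i, HasDerivAt (fun s => f s i) (x i ⬝ᵥ w) t) :
    HasDerivAt (fun s => ∑ i, Real.exp (-(y i * f s i)))
      (-(expLossNegGrad x y (f t) ⬝ᵥ w)) t := by
  refine (HasDerivAt.fun_sum fun i _ => ((hf i).const_mul (y i)).neg.exp).congr_deriv ?_
  simp only [Pi.neg_apply, expLossNegGrad, sum_dotProduct, smul_dotProduct, smul_eq_mul,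
    ← sum_neg_distrib]
  exact sum_congr rfl fun i _ => by ring

lemma mul_sum_exp_le_expLossNegGrad_dotProduct [Fintype m] {γ : ℝ} {z : m → ℝ}
    (hmargin : ∀ i, γ ≤ y i * (z ⬝ᵥ x i)) :
    γ * ∑ i, Real.exp (-(y i * p i)) ≤ expLossNegGrad x y p ⬝ᵥ z := by
  rw [expLossNegGrad, sum_dotProduct, mul_sum]
  gcongr with i
  rw [smul_dotProduct, smul_eq_mul, dotProduct_comm]
  linarith [mul_le_mul_of_nonneg_left (hmargin i) (Real.exp_pos (-(y i * p i))).le]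

lemma sq_mul_sum_exp_le_sum_sq_expLossNegGrad [Fintype m] {γ : ℝ} (hγ : 0 ≤ γ) {z : m → ℝ}
    (hz : ∑ j, z j ^ 2 = 1) (hmargin : ∀ i, γ ≤ y i * (z ⬝ᵥ x i)) :
    (γ * ∑ i, Real.exp (-(y i * p i))) ^ 2 ≤ ∑ j, expLossNegGrad x y p j ^ 2 := by
  have hL : 0 ≤ γ * ∑ i, Real.exp (-(y i * p i)) :=
    mul_nonneg hγ (sum_nonneg fun i _ => (Real.exp_pos _).le)
  calc (γ * ∑ i, Real.exp (-(y i * p i))) ^ 2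
      ≤ (expLossNegGrad x y p ⬝ᵥ z) ^ 2 :=
        pow_le_pow_left₀ hL (mul_sum_exp_le_expLossNegGrad_dotProduct x y p hmargin) 2
    _ ≤ (∑ j, expLossNegGrad x y p j ^ 2) * ∑ j, z j ^ 2 := sum_mul_sq_le_sq_mul_sq _ _ _
    _ = ∑ j, expLossNegGrad x y p j ^ 2 := by rw [hz, mul_one]

end

theorem linear_net_exp_loss_decrease_general {D h n : ℕ}
    (x : Fin n → Fin D → ℝ) (y : Fin n → ℝ)
    (γ : ℝ) (hγ : 0 < γ) (z : Fin D → ℝ) (hz : ∑ d, (z d) ^ 2 = 1)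
    (hmargin : ∀ i, γ ≤ y i * ∑ d, z d * x i d)
    (W : ℝ → Matrix (Fin D) (Fin h) ℝ) (v : ℝ → Fin h → ℝ)
    (f : ℝ → Fin n → ℝ)
    (hf : ∀ t i, f t i = ∑ d, x i d * (W t).mulVec (v t) d)
    (L : ℝ → ℝ)
    (hL : ∀ t, L t = ∑ i, Real.exp (-(y i * f t i)))
    (t : ℝ)
    (hW : ∀ d k, HasDerivAt (fun s => W s d k)
        (∑ i, y i * Real.exp (-(y i * f t i)) * x i d * v t k) t)
    (hv : ∀ k, HasDerivAt (fun s => v s k)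
        (∑ i, y i * Real.exp (-(y i * f t i)) * (∑ d, x i d * W t d k)) t) :
    deriv L t ≤ -((∑ k, (v t k) ^ 2) * γ ^ 2 * (L t) ^ 2) := by
  set u := expLossNegGrad x y (f t)
  have hW' : ∀ d k, HasDerivAt (fun s => W s d k) (vecMulVec u (v t) d k) t := by
    simpa only [vecMulVec_apply, u, expLossNegGrad_apply, sum_mul] using hW
  have hv' : ∀ k, HasDerivAt (fun s => v s k) ((u ᵥ* W t) k) t := by
    intro k
    rw [expLossNegGrad_vecMul_apply]
    exact hv k
  have hL' : HasDerivAt L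
      (-(u ⬝ᵥ (vecMulVec u (v t) *ᵥ v t + W t *ᵥ (u ᵥ* W t)))) t := by
    rw [funext hL]
    exact hasDerivAt_sum_exp_neg_mul x y fun i =>
      (hasDerivAt_dotProduct_mulVec (x i) hW' hv').congr_of_eventuallyEq
        (.of_forall fun s => hf s i)
  have hu : (γ * L t) ^ 2 ≤ ∑ d, u d ^ 2 := by
    rw [hL]
    exact sq_mul_sum_exp_le_sum_sq_expLossNegGrad x y (f t) hγ.le hz hmargin
  rw [hL'.deriv, dotProduct_vecMulVec_mulVec_add_mulVec_vecMul]
  have hv2 : 0 ≤ ∑ k, v t k ^ 2 := sum_nonneg fun k _ => sq_nonneg _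
  have hWu : 0 ≤ ∑ k, (u ᵥ* W t) k ^ 2 := sum_nonneg fun k _ => sq_nonneg _
  nlinarith [mul_le_mul_of_nonneg_left hu hv2]

/-- Gradient flow on the linear-network exponential loss L(W,v) = Σᵢ exp(−yᵢ vᵀWᵀxᵢ):
    with a margin-γ linearly separable dataset, dL/dt ≤ −‖v‖²γ²L². -/
theorem linear_net_exp_loss_decrease {D h n : ℕ}
    (x : Fin n → Fin D → ℝ) (y : Fin n → ℝ)
    (hy : ∀ i, y i = 1 ∨ y i = -1)
    (γ : ℝ) (hγ : 0 < γ) (z : Fin D → ℝ) (hz : ∑ d, (z d) ^ 2 = 1)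
    (hmargin : ∀ i, γ ≤ y i * ∑ d, z d * x i d)
    (W : ℝ → Matrix (Fin D) (Fin h) ℝ) (v : ℝ → Fin h → ℝ)
    (f : ℝ → Fin n → ℝ)
    (hf : ∀ t i, f t i = ∑ d, x i d * (W t).mulVec (v t) d)
    (L : ℝ → ℝ)
    (hL : ∀ t, L t = ∑ i, Real.exp (-(y i * f t i)))
    (t : ℝ)
    (hW : ∀ d k, HasDerivAt (fun s => W s d k)
        (∑ i, y i * Real.exp (-(y i * f t i)) * x i d * v t k) t)
    (hv : ∀ k, HasDerivAt (fun s => v s k)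
        (∑ i, y i * Real.exp (-(y i * f t i)) * (∑ d, x i d * W t d k)) t) :
    deriv L t ≤ -((∑ k, (v t k) ^ 2) * γ ^ 2 * (L t) ^ 2) :=
  linear_net_exp_loss_decrease_general x y γ hγ z hz hmargin W v f hf L hL t hW hv
end

section
/- Let the data satisfy μ-separation with μ > 0. Along any Caratheodory solution of gradient flow (with ReLU subgradient σ'(x) = 1_{x>0} and exponential loss), for any neuron w_j not in the dead cone S_dead = {z : ⟨z, x_i⟩ ≤ 0 ∀i} and any data index i, the quantity y_i·sign(v_j)·⟨x_i, ∇_{w_j} L⟩ is strictly positive, where L(W, v) = Σ_k exp(−y_k f(x_k; W, v)). -/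
open Finset

section InnerProductSpace

variable {E : Type*} [NormedAddCommGroup E] [InnerProductSpace ℝ E]

lemma mul_mul_inner_pos_of_separated {μ a b : ℝ} {u w : E} (hμ : 0 < μ) (hu : u ≠ 0)
    (hw : w ≠ 0) (hsep : μ * (‖u‖ * ‖w‖) ≤ inner ℝ (a • u) (b • w)) :
    0 < a * b * inner ℝ u w := by
  have hlow : 0 < μ * (‖u‖ * ‖w‖) := by
    have := norm_pos_iff.mpr hu
    have := norm_pos_iff.mpr hw
    positivity
  rw [real_inner_smul_left, real_inner_smul_right, ← mul_assoc a] at hsep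
  exact hlow.trans_le hsep

lemma inner_sum_ite_smul_pos {ι : Type*} [Fintype ι] (p : ι → Prop) [DecidablePred p]
    (c : ι → ℝ) (u : E) (z : ι → E) (hpos : ∀ k, p k → 0 < c k * inner ℝ u (z k))
    (hp : ∃ k, p k) :
    0 < inner ℝ u (∑ k, (if p k then (1 : ℝ) else 0) • (c k • z k)) := by
  simp only [inner_sum, ite_smul, one_smul, zero_smul, real_inner_smul_right, ← sum_filter]
  obtain ⟨k, hk⟩ := hp
  exact sum_pos (fun k hk ↦ hpos k (mem_filter.mp hk).2) ⟨k, mem_filter.mpr ⟨mem_univ k, hk⟩⟩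

end InnerProductSpace

theorem activation_monotone_general {D n h : ℕ}
    (x : Fin n → EuclideanSpace ℝ (Fin D)) (y : Fin n → ℝ)
    (μ : ℝ) (hμ : 0 < μ)
    (hx : ∀ i, x i ≠ 0)
    (hsep : ∀ i k, μ * (‖x i‖ * ‖x k‖) ≤ (inner ℝ (y i • x i) (y k • x k) : ℝ))
    (W : Fin h → EuclideanSpace ℝ (Fin D)) (v : Fin h → ℝ)
    (hbal : ∀ j, |v j| = ‖W j‖) (hnz : ∀ j, W j ≠ 0)
    (f : Fin n → ℝ)
    (j : Fin h)
    (hnotdead : ∃ k, 0 < (inner ℝ (x k) (W j) : ℝ))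
    (grad : EuclideanSpace ℝ (Fin D))
    (hgrad : grad = ∑ k, (if 0 < (inner ℝ (x k) (W j) : ℝ) then (1 : ℝ) else 0) •
        ((y k * Real.exp (-(y k * f k)) * v j) • x k))
    (i : Fin n) :
    0 < y i * Real.sign (v j) * (inner ℝ (x i) grad : ℝ) := by
  have hv : 0 < Real.sign (v j) * v j :=
    Real.sign_mul_pos_of_ne_zero _ (abs_ne_zero.mp (by simpa [hbal j] using hnz j))
  rw [← real_inner_smul_left, hgrad]
  refine inner_sum_ite_smul_pos _ _ _ _ (fun k _ ↦ ?_) hnotdead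
  have hik := mul_mul_inner_pos_of_separated hμ (hx i) (hx k) (hsep i k)
  have hexp := Real.exp_pos (-(y k * f k))
  calc (0 : ℝ)
      < Real.exp (-(y k * f k)) * (Real.sign (v j) * v j) * (y i * y k * inner ℝ (x i) (x k)) := by
        positivity
    _ = _ := by rw [real_inner_smul_left]; ring

/-- Under μ-separation, for any neuron w_j not in the dead cone, and any data index i,
    y_i · sign(v_j) · ⟨x_i, ∇_{w_j} L⟩ > 0, where
    ∇_{w_j} L = Σ_k 1_{⟨x_k,w_j⟩>0} y_k exp(−y_k f(x_k)) x_k v_j. -/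
theorem activation_monotone {D n h : ℕ}
    (x : Fin n → EuclideanSpace ℝ (Fin D)) (y : Fin n → ℝ)
    (μ : ℝ) (hμ : 0 < μ)
    (hx : ∀ i, x i ≠ 0)
    (hy : ∀ i, y i = 1 ∨ y i = -1)
    (hsep : ∀ i k, μ * (‖x i‖ * ‖x k‖) ≤ (inner ℝ (y i • x i) (y k • x k) : ℝ))
    (W : Fin h → EuclideanSpace ℝ (Fin D)) (v : Fin h → ℝ)
    (hbal : ∀ j, |v j| = ‖W j‖) (hnz : ∀ j, W j ≠ 0)
    (f : Fin n → ℝ)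
    (hf : ∀ k, f k = ∑ j, v j * max (inner ℝ (x k) (W j) : ℝ) 0)
    (j : Fin h)
    (hnotdead : ∃ k, 0 < (inner ℝ (x k) (W j) : ℝ))
    (grad : EuclideanSpace ℝ (Fin D))
    (hgrad : grad = ∑ k, (if 0 < (inner ℝ (x k) (W j) : ℝ) then (1 : ℝ) else 0) •
        ((y k * Real.exp (-(y k * f k)) * v j) • x k))
    (i : Fin n) :
    0 < y i * Real.sign (v j) * (inner ℝ (x i) grad : ℝ) :=
  activation_monotone_general x y μ hμ hx hsep W v hbal hnz f j hnotdead grad hgrad i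
end

section
/- Under gradient flow on the two-layer ReLU network with balanced initialization (v_j² = ‖w_j‖² at time 0), for any neuron j and any time t ≤ T during which max_i |f(x_i; W, v)| ≤ 2ε√h X_max W_max², the squared norm satisfies d/dt ‖w_j‖² ≤ 2n(X_max + 4ε√h X_max² W_max²)‖w_j‖², where X_max = max_i ‖x_i‖ and the loss ℓ satisfies |−∇_ŷℓ(y, ŷ) − y| ≤ 2|ŷ| for |ŷ| ≤ 1. -/
/-! Each summand of the derivative is at most `|∇ℓ| · |⟨x_i, w_j⟩| · ‖w_j‖ ≤ |∇ℓ| X_max ‖w_j‖²`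
by Cauchy–Schwarz, since the ReLU indicator and the sign `s_j` have absolute value at most one.
The smallness assumption makes every output satisfy `|f(x_i)| ≤ 1`, so the loss condition
yields `|∇ℓ| ≤ |y_i| + 2|f(x_i)| ≤ 1 + 4ε√h X_max W_max²`; summing over the `n` samples gives
the bound. -/

open RealInnerProductSpace

lemma abs_le_abs_add_of_abs_neg_sub_le {g y c : ℝ} (h : |-g - y| ≤ c) : |g| ≤ |y| + c := by
  have := abs_sub_abs_le_abs_sub (-g) y
  rw [abs_neg] at this
  linarith

lemma abs_relu_gradient_term_le {E : Type*} [NormedAddCommGroup E] [InnerProductSpace ℝ E]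
    (x w : E) (g : ℝ) {s : ℝ} (hs : |s| ≤ 1) :
    |(if 0 < ⟪x, w⟫ then (1 : ℝ) else 0) * g * ⟪x, w⟫ * s * ‖w‖| ≤ |g| * ‖x‖ * ‖w‖ ^ 2 := by
  have hind : |(if 0 < ⟪x, w⟫ then (1 : ℝ) else 0)| ≤ 1 := by split_ifs <;> norm_num
  rw [abs_mul, abs_mul, abs_mul, abs_mul, abs_norm]
  calc _ ≤ 1 * |g| * (‖x‖ * ‖w‖) * 1 * ‖w‖ := by
        gcongr
        exact abs_real_inner_le_norm x w
    _ = |g| * ‖x‖ * ‖w‖ ^ 2 := by ring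

lemma neg_sum_le_card_mul {ι : Type*} [Fintype ι] {T : ι → ℝ} {C : ℝ} (h : ∀ i, |T i| ≤ C) :
    -∑ i, T i ≤ Fintype.card ι * C := by
  rw [← Finset.sum_neg_distrib, ← nsmul_eq_mul]
  exact Finset.sum_le_card_nsmul _ _ _ fun i _ => (neg_le_abs _).trans (h i)

theorem neuron_norm_growth_bound_general {D n h : ℕ}
    (ℓd : ℝ → ℝ → ℝ)  -- ∇_yh ℓ(y, yh)
    (hloss : ∀ y yh : ℝ, (y = 1 ∨ y = -1) → |yh| ≤ 1 → |(-ℓd y yh) - y| ≤ 2 * |yh|)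
    (x : Fin n → EuclideanSpace ℝ (Fin D)) (y : Fin n → ℝ)
    (hy : ∀ i, y i = 1 ∨ y i = -1)
    (Xmax Wmax ε : ℝ) (hXmax : ∀ i, ‖x i‖ ≤ Xmax)
    (hsmall : 4 * ε * Real.sqrt h * Xmax * Wmax ^ 2 ≤ 1)
    (W : ℝ → Fin h → EuclideanSpace ℝ (Fin D)) (s : Fin h → ℝ)
    (hs : ∀ j, s j = 1 ∨ s j = -1)  -- signs, with balancedness v_j = s_j ‖w_j‖
    (t : ℝ) (j : Fin h)
    (f : Fin n → ℝ)
    (hfbound : ∀ k, |f k| ≤ 2 * ε * Real.sqrt h * Xmax * Wmax ^ 2)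
    (Dval : ℝ)
    (hDval : Dval = -2 * ∑ i, (if 0 < (inner ℝ (x i) (W t j) : ℝ) then (1 : ℝ) else 0) *
        ℓd (y i) (f i) * (inner ℝ (x i) (W t j) : ℝ) * s j * ‖W t j‖) :
    Dval ≤ 2 * n * (Xmax + 4 * ε * Real.sqrt h * Xmax ^ 2 * Wmax ^ 2) * ‖W t j‖ ^ 2 := by
  have hf_le_one : ∀ i, |f i| ≤ 1 := fun i => by linarith [hfbound i, abs_nonneg (f i)]
  have hℓd : ∀ i, |ℓd (y i) (f i)| ≤ 1 + 4 * ε * Real.sqrt h * Xmax * Wmax ^ 2 := fun i => by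
    have := abs_le_abs_add_of_abs_neg_sub_le (hloss _ _ (hy i) (hf_le_one i))
    rw [(abs_eq zero_le_one).2 (hy i)] at this
    linarith [hfbound i]
  have hterm : ∀ i, |(if 0 < (inner ℝ (x i) (W t j) : ℝ) then (1 : ℝ) else 0) *
      ℓd (y i) (f i) * (inner ℝ (x i) (W t j) : ℝ) * s j * ‖W t j‖| ≤
      (Xmax + 4 * ε * Real.sqrt h * Xmax ^ 2 * Wmax ^ 2) * ‖W t j‖ ^ 2 := fun i => by
    have hcoeff_nonneg : 0 ≤ 1 + 4 * ε * Real.sqrt h * Xmax * Wmax ^ 2 :=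
      (abs_nonneg _).trans (hℓd i)
    calc _ ≤ |ℓd (y i) (f i)| * ‖x i‖ * ‖W t j‖ ^ 2 :=
          abs_relu_gradient_term_le _ _ _ ((abs_eq zero_le_one).2 (hs j)).le
      _ ≤ (1 + 4 * ε * Real.sqrt h * Xmax * Wmax ^ 2) * Xmax * ‖W t j‖ ^ 2 := by
          gcongr
          exacts [hℓd i, hXmax i]
      _ = _ := by ring
  have hsum := neg_sum_le_card_mul hterm
  rw [Fintype.card_fin] at hsum
  rw [hDval]
  linarith

/-- During the early phase, while max_i |f(x_i)| ≤ 2ε√h X_max W_max², the squared neuron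
    norm grows at most like d/dt ‖w_j‖² ≤ 2n(X_max + 4ε√h X_max² W_max²)‖w_j‖². -/
theorem neuron_norm_growth_bound {D n h : ℕ}
    (ℓd : ℝ → ℝ → ℝ)  -- ∇_yh ℓ(y, yh)
    (hloss : ∀ y yh : ℝ, (y = 1 ∨ y = -1) → |yh| ≤ 1 → |(-ℓd y yh) - y| ≤ 2 * |yh|)
    (x : Fin n → EuclideanSpace ℝ (Fin D)) (y : Fin n → ℝ)
    (hy : ∀ i, y i = 1 ∨ y i = -1)
    (Xmax Wmax ε : ℝ) (hXmax : ∀ i, ‖x i‖ ≤ Xmax)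
    (hε : 0 ≤ ε) (hsmall : 4 * ε * Real.sqrt h * Xmax * Wmax ^ 2 ≤ 1)
    (W : ℝ → Fin h → EuclideanSpace ℝ (Fin D)) (s : Fin h → ℝ)
    (hs : ∀ j, s j = 1 ∨ s j = -1)  -- signs, with balancedness v_j = s_j ‖w_j‖
    (t : ℝ) (j : Fin h)
    (f : Fin n → ℝ)
    (hf : ∀ k, f k = ∑ j', (s j' * ‖W t j'‖) * max (inner ℝ (x k) (W t j') : ℝ) 0)
    (hfbound : ∀ k, |f k| ≤ 2 * ε * Real.sqrt h * Xmax * Wmax ^ 2)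
    (Dval : ℝ)
    (hDval : Dval = -2 * ∑ i, (if 0 < (inner ℝ (x i) (W t j) : ℝ) then (1 : ℝ) else 0) *
        ℓd (y i) (f i) * (inner ℝ (x i) (W t j) : ℝ) * s j * ‖W t j‖)
    (hderiv : HasDerivAt (fun τ => ‖W τ j‖ ^ 2) Dval t) :
    Dval ≤ 2 * n * (Xmax + 4 * ε * Real.sqrt h * Xmax ^ 2 * Wmax ^ 2) * ‖W t j‖ ^ 2 :=
  neuron_norm_growth_bound_general ℓd hloss x y hy Xmax Wmax ε hXmax hsmall W s hs t j f hfbound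
    Dval hDval
end

section
/- Let a_i ∈ [1/2, 3/2] for i = 1, ..., m and let x_1, ..., x_m ∈ ℝ^D satisfy ⟨x_i, x_j⟩ ≥ 0 for all i, j, with Σ_{i,j} ⟨x_i, x_j⟩ > 0. Define x_+ = Σ_i x_i and x̃ = Σ_i a_i x_i. Then cos(x_+, x̃) ≥ 1/3. -/
/-! Write `G i j = ⟪x i, x j⟫ ≥ 0`, so that `‖∑ i, x i‖² = ∑ i, ∑ j, G i j`. Since every weight is
at least `1/2`, the inner product `⟪∑ i, x i, ∑ i, a i • x i⟫ = ∑ i, ∑ j, a j G i j` is at least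
`‖∑ i, x i‖² / 2`. Since every product `a i a j` is at most `(3/2)²`, the weighted aggregate
satisfies `‖∑ i, a i • x i‖ ≤ (3/2) ‖∑ i, x i‖`. Together these give the cosine bound `(1/2)/(3/2)`. -/

open Finset RealInnerProductSpace

section GramExpansion

variable {ι E : Type*} [Fintype ι] [NormedAddCommGroup E] [InnerProductSpace ℝ E]

theorem inner_sum_smul_sum_smul_eq (a b : ι → ℝ) (x : ι → E) :
    ⟪∑ i, a i • x i, ∑ j, b j • x j⟫ = ∑ i, ∑ j, a i * b j * ⟪x i, x j⟫ := by
  refine (sum_inner _ _ _).trans (sum_congr rfl fun i _ => ?_)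
  rw [real_inner_smul_left, inner_sum, mul_sum]
  simp only [real_inner_smul_right, mul_left_comm (a i), mul_assoc]

theorem inner_sum_sum_smul_eq (a : ι → ℝ) (x : ι → E) :
    ⟪∑ i, x i, ∑ j, a j • x j⟫ = ∑ i, ∑ j, a j * ⟪x i, x j⟫ := by
  simpa using inner_sum_smul_sum_smul_eq (fun _ => 1) a x

theorem norm_sum_sq_eq (x : ι → E) : ‖∑ i, x i‖ ^ 2 = ∑ i, ∑ j, ⟪x i, x j⟫ := by
  simpa using inner_sum_sum_smul_eq (fun _ => 1) x

variable {x : ι → E} (hx : ∀ i j, 0 ≤ ⟪x i, x j⟫)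
include hx

theorem mul_norm_sum_sq_le_inner_sum_sum_smul {a : ι → ℝ} {b : ℝ} (ha : ∀ i, b ≤ a i) :
    b * ‖∑ i, x i‖ ^ 2 ≤ ⟪∑ i, x i, ∑ j, a j • x j⟫ := by
  rw [norm_sum_sq_eq, inner_sum_sum_smul_eq, mul_sum]
  gcongr with i _
  rw [mul_sum]
  gcongr with j _
  · exact hx i j
  · exact ha j

theorem norm_sum_smul_le_mul_norm_sum {a : ι → ℝ} {c : ℝ} (hc : 0 ≤ c) (ha : ∀ i, |a i| ≤ c) :
    ‖∑ i, a i • x i‖ ≤ c * ‖∑ i, x i‖ := by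
  have hsq : ‖∑ i, a i • x i‖ ^ 2 ≤ (c * ‖∑ i, x i‖) ^ 2 := by
    rw [← real_inner_self_eq_norm_sq, inner_sum_smul_sum_smul_eq, mul_pow, norm_sum_sq_eq,
      mul_sum]
    gcongr with i _
    rw [mul_sum]
    gcongr with j _
    · exact hx i j
    calc a i * a j ≤ |a i| * |a j| := (le_abs_self _).trans_eq (abs_mul _ _)
      _ ≤ c ^ 2 := by rw [sq]; exact mul_le_mul (ha i) (ha j) (abs_nonneg _) hc
  exact le_of_sq_le_sq hsq (by positivity)

end GramExpansion

theorem weighted_aggregate_alignment_general {D m : ℕ}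
    (x : Fin m → EuclideanSpace ℝ (Fin D)) (a : Fin m → ℝ)
    (ha : ∀ i, a i ∈ Set.Icc (1 / 2 : ℝ) (3 / 2))
    (hpos : ∀ i j, 0 ≤ (inner ℝ (x i) (x j) : ℝ)) :
    (1 / 3 : ℝ) * (‖∑ i, x i‖ * ‖∑ i, a i • x i‖) ≤
      (inner ℝ (∑ i, x i) (∑ i, a i • x i) : ℝ) := by
  have hlow : 1 / 2 * ‖∑ i, x i‖ ^ 2 ≤ ⟪∑ i, x i, ∑ i, a i • x i⟫ :=
    mul_norm_sum_sq_le_inner_sum_sum_smul hpos fun i => (ha i).1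
  have hhigh : ‖∑ i, a i • x i‖ ≤ 3 / 2 * ‖∑ i, x i‖ :=
    norm_sum_smul_le_mul_norm_sum hpos (by norm_num) fun i =>
      abs_le.2 ⟨by linarith [(ha i).1], (ha i).2⟩
  calc 1 / 3 * (‖∑ i, x i‖ * ‖∑ i, a i • x i‖)
      ≤ 1 / 3 * (‖∑ i, x i‖ * (3 / 2 * ‖∑ i, x i‖)) := by gcongr
    _ = 1 / 2 * ‖∑ i, x i‖ ^ 2 := by ring
    _ ≤ _ := hlow

/-- With weights a_i ∈ [1/2, 3/2] and pairwise nonnegative inner products, the weighted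
    aggregate x̃ = Σ a_i x_i stays aligned with x₊ = Σ x_i : cos(x₊, x̃) ≥ 1/3. -/
theorem weighted_aggregate_alignment {D m : ℕ}
    (x : Fin m → EuclideanSpace ℝ (Fin D)) (a : Fin m → ℝ)
    (ha : ∀ i, a i ∈ Set.Icc (1 / 2 : ℝ) (3 / 2))
    (hpos : ∀ i j, 0 ≤ (inner ℝ (x i) (x j) : ℝ))
    (hS : 0 < ∑ i, ∑ j, (inner ℝ (x i) (x j) : ℝ)) :
    (1 / 3 : ℝ) * (‖∑ i, x i‖ * ‖∑ i, a i • x i‖) ≤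
      (inner ℝ (∑ i, x i) (∑ i, a i • x i) : ℝ) :=
  weighted_aggregate_alignment_general x a ha hpos
end
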